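/- arXiv:1602.07440 — 3 statements merged into one kernel-verified Lean document; each statement's English description precedes it below -/
import Mathlib

section
/- If Z₁ and Z₂ are positive random variables with E[(log Z₁)²] < ∞ and E[(log Z₂)²] < ∞, then Cov(log Z₁, log Z₂) = ∫₀^∞ ∫₀^∞ ( P(Z₁ > r, Z₂ > s) − P(Z₁ > r) P(Z₂ > s) ) (ds/s)(dr/r). -/
/-!
Let `(ω, ω')` be a pair of independent draws from `P`. For square-integrable `X, Y`,
`E[(X ω - X ω') (Y ω - Y ω')] = 2 Cov(X, Y)`. For `a, b > 0`,
`log a - log b = ∫₀^∞ (1{r < a} - 1{r < b}) dr/r`, and the same integral with absolute values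
gives `|log a - log b|`, so Fubini applies to the product of two such representations. Exchanging
the order of integration, the inner expectation is `2 (P(A ∩ B) - P(A) P(B))` for the events
`A = {r < Z₁}`, `B = {s < Z₂}`, by the first identity applied to indicators.
-/

open MeasureTheory Set

section IndependentCopy

variable {Ω : Type*} [MeasurableSpace Ω] {P : Measure Ω} [IsProbabilityMeasure P] {f g : Ω → ℝ}

lemma integrable_prod_sub_mul_sub (hf : MemLp f 2 P) (hg : MemLp g 2 P) :
    Integrable (fun q : Ω × Ω => (f q.1 - f q.2) * (g q.1 - g q.2)) (P.prod P) :=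
  ((hf.comp_fst P).sub (hf.comp_snd P)).integrable_mul ((hg.comp_fst P).sub (hg.comp_snd P))

lemma integral_prod_sub_mul_sub (hf : MemLp f 2 P) (hg : MemLp g 2 P) :
    ∫ q, (f q.1 - f q.2) * (g q.1 - g q.2) ∂(P.prod P)
      = 2 * (∫ ω, f ω * g ω ∂P - (∫ ω, f ω ∂P) * ∫ ω, g ω ∂P) := by
  have hfg : Integrable (fun ω => f ω * g ω) P := hf.integrable_mul hg
  have hf₁ := hf.integrable one_le_two
  have hg₁ := hg.integrable one_le_two
  have hdiag : Integrable (fun q : Ω × Ω => f q.1 * g q.1 + f q.2 * g q.2) (P.prod P) :=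
    (hfg.comp_fst P).add (hfg.comp_snd P)
  have hcross : Integrable (fun q : Ω × Ω => f q.1 * g q.2 + g q.1 * f q.2) (P.prod P) :=
    (hf₁.mul_prod hg₁).add (hg₁.mul_prod hf₁)
  calc ∫ q, (f q.1 - f q.2) * (g q.1 - g q.2) ∂(P.prod P)
      = ∫ q, ((f q.1 * g q.1 + f q.2 * g q.2) - (f q.1 * g q.2 + g q.1 * f q.2)) ∂(P.prod P) := by
        congr 1 with q; ring
    _ = _ := by
        rw [integral_sub hdiag hcross,
          integral_add (hfg.comp_fst P) (hfg.comp_snd P),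
          integral_add (hf₁.mul_prod hg₁) (hg₁.mul_prod hf₁),
          integral_fun_fst (fun ω => f ω * g ω), integral_fun_snd (fun ω => f ω * g ω),
          integral_prod_mul f g, integral_prod_mul g f]
        simp only [probReal_univ, one_smul]
        ring

end IndependentCopy

noncomputable def logKernel (a b r : ℝ) : ℝ :=
  ((if r < a then 1 else 0) - (if r < b then 1 else 0)) / r

lemma logKernel_eq_indicator {a b : ℝ} (hba : b ≤ a) :
    logKernel a b = (Ico b a).indicator (·⁻¹) := by
  ext r
  by_cases hrb : r < b
  · simp [logKernel, hrb, hrb.trans_le hba, not_le.2 hrb]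
  · by_cases hra : r < a <;> simp [logKernel, hrb, hra, not_lt.1 hrb, div_eq_mul_inv]

lemma logKernel_swap (a b : ℝ) : logKernel b a = -logKernel a b := by
  ext r; simp only [logKernel, Pi.neg_apply]; ring

lemma abs_logKernel_of_le {a b : ℝ} (hb : 0 ≤ b) (hba : b ≤ a) (r : ℝ) :
    |logKernel a b r| = logKernel a b r := by
  rw [logKernel_eq_indicator hba]
  exact abs_of_nonneg (indicator_nonneg (fun x hx => inv_nonneg.2 (hb.trans hx.1)) r)

lemma integrable_logKernel {a b : ℝ} (ha : 0 < a) (hb : 0 < b) :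
    Integrable (logKernel a b) (volume.restrict (Ioi 0)) := by
  wlog hba : b ≤ a generalizing a b
  · rw [← neg_neg (logKernel a b), ← logKernel_swap]
    exact (this hb ha (le_of_not_ge hba)).neg
  have hinv : IntegrableOn (·⁻¹) (Ico b a) :=
    ((continuousOn_inv₀.mono fun x hx => (hb.trans_le hx.1).ne').integrableOn_Icc).mono_set
      Ico_subset_Icc_self
  rw [logKernel_eq_indicator hba]
  exact (hinv.integrable_indicator measurableSet_Ico).restrict

lemma integral_logKernel {a b : ℝ} (ha : 0 < a) (hb : 0 < b) :
    ∫ r in Ioi 0, logKernel a b r = Real.log a - Real.log b := by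
  wlog hba : b ≤ a generalizing a b
  · rw [← neg_sub, ← this hb ha (le_of_not_ge hba), logKernel_swap, Pi.neg_def, integral_neg]
  rw [logKernel_eq_indicator hba, setIntegral_indicator measurableSet_Ico,
    inter_eq_right (s := Ioi 0).2 fun x hx => hb.trans_le hx.1, integral_Ico_eq_integral_Ioo,
    ← integral_Ioc_eq_integral_Ioo, ← intervalIntegral.integral_of_le hba,
    integral_inv_of_pos hb ha, Real.log_div ha.ne' hb.ne']

lemma integral_abs_logKernel {a b : ℝ} (ha : 0 < a) (hb : 0 < b) :
    ∫ r in Ioi 0, |logKernel a b r| = |Real.log a - Real.log b| := by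
  wlog hba : b ≤ a generalizing a b
  · have hsymm : (fun r => |logKernel a b r|) = fun r => |logKernel b a r| := by
      ext r; rw [logKernel_swap, Pi.neg_apply, abs_neg]
    rw [hsymm, abs_sub_comm]
    exact this hb ha (le_of_not_ge hba)
  simp_rw [abs_logKernel_of_le hb.le hba, integral_logKernel ha hb]
  exact (abs_of_nonneg (sub_nonneg.2 (Real.log_le_log hb hba))).symm

lemma Measurable.logKernel {α : Type*} [MeasurableSpace α] {a b r : α → ℝ}
    (ha : Measurable a) (hb : Measurable b) (hr : Measurable r) :
    Measurable fun x => logKernel (a x) (b x) (r x) :=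
  ((Measurable.ite (measurableSet_lt hr ha) measurable_const measurable_const).sub
    (Measurable.ite (measurableSet_lt hr hb) measurable_const measurable_const)).div hr

local notation "μ₊" => volume.restrict (Ioi (0 : ℝ))

lemma integral_logKernel_mul_logKernel {a₁ b₁ a₂ b₂ : ℝ} (ha₁ : 0 < a₁) (hb₁ : 0 < b₁)
    (ha₂ : 0 < a₂) (hb₂ : 0 < b₂) :
    ∫ p, logKernel a₁ b₁ p.1 * logKernel a₂ b₂ p.2 ∂(μ₊.prod μ₊)
      = (Real.log a₁ - Real.log b₁) * (Real.log a₂ - Real.log b₂) := by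
  rw [integral_prod_mul, integral_logKernel ha₁ hb₁, integral_logKernel ha₂ hb₂]

lemma logKernel_comp_eq_indicator {Ω : Type*} (Z : Ω → ℝ) (r : ℝ) (ω ω' : Ω) :
    logKernel (Z ω) (Z ω') r
      = ({x | r < Z x}.indicator 1 ω - {x | r < Z x}.indicator 1 ω') / r := by
  simp [logKernel, indicator_apply]

section Hoeffding

variable {Ω : Type*} [MeasurableSpace Ω] {Z₁ Z₂ : Ω → ℝ}

noncomputable def hoeffdingKernel (Z₁ Z₂ : Ω → ℝ) (q : Ω × Ω) (p : ℝ × ℝ) : ℝ :=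
  logKernel (Z₁ q.1) (Z₁ q.2) p.1 * logKernel (Z₂ q.1) (Z₂ q.2) p.2

lemma integrable_hoeffdingKernel {μ : Measure (Ω × Ω)} [SFinite μ] (hZ₁ : Measurable Z₁)
    (hZ₂ : Measurable Z₂) (hZ₁pos : ∀ ω, 0 < Z₁ ω) (hZ₂pos : ∀ ω, 0 < Z₂ ω)
    (hlog : Integrable (fun q => (Real.log (Z₁ q.1) - Real.log (Z₁ q.2))
      * (Real.log (Z₂ q.1) - Real.log (Z₂ q.2))) μ) :
    Integrable (Function.uncurry (hoeffdingKernel Z₁ Z₂)) (μ.prod (μ₊.prod μ₊)) := by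
  have hmeas : Measurable (Function.uncurry (hoeffdingKernel Z₁ Z₂)) :=
    ((hZ₁.comp measurable_fst.fst).logKernel (hZ₁.comp measurable_fst.snd) measurable_snd.fst).mul
      ((hZ₂.comp measurable_fst.fst).logKernel (hZ₂.comp measurable_fst.snd) measurable_snd.snd)
  rw [integrable_prod_iff hmeas.aestronglyMeasurable]
  refine ⟨.of_forall fun q => (integrable_logKernel (hZ₁pos q.1) (hZ₁pos q.2)).mul_prod
    (integrable_logKernel (hZ₂pos q.1) (hZ₂pos q.2)), hlog.norm.congr (.of_forall fun q => ?_)⟩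
  simp only [Function.uncurry_apply_pair, hoeffdingKernel, norm_mul, Real.norm_eq_abs]
  rw [integral_prod_mul (fun r => |logKernel (Z₁ q.1) (Z₁ q.2) r|)
      (fun s => |logKernel (Z₂ q.1) (Z₂ q.2) s|),
    integral_abs_logKernel (hZ₁pos q.1) (hZ₁pos q.2),
    integral_abs_logKernel (hZ₂pos q.1) (hZ₂pos q.2)]

lemma integral_hoeffdingKernel {P : Measure Ω} [IsProbabilityMeasure P]
    (hZ₁ : Measurable Z₁) (hZ₂ : Measurable Z₂) (p : ℝ × ℝ) :
    ∫ q, hoeffdingKernel Z₁ Z₂ q p ∂(P.prod P)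
      = 2 * (P.real {ω | p.1 < Z₁ ω ∧ p.2 < Z₂ ω}
          - P.real {ω | p.1 < Z₁ ω} * P.real {ω | p.2 < Z₂ ω}) / (p.1 * p.2) := by
  set A := {ω | p.1 < Z₁ ω}
  set B := {ω | p.2 < Z₂ ω}
  have hA : MeasurableSet A := measurableSet_lt measurable_const hZ₁
  have hB : MeasurableSet B := measurableSet_lt measurable_const hZ₂
  have h1A : MemLp (A.indicator 1) 2 P :=
    memLp_indicator_const 2 hA (1 : ℝ) (.inr (measure_ne_top P A))
  have h1B : MemLp (B.indicator 1) 2 P :=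
    memLp_indicator_const 2 hB (1 : ℝ) (.inr (measure_ne_top P B))
  calc ∫ q, hoeffdingKernel Z₁ Z₂ q p ∂(P.prod P)
      = (∫ q, (A.indicator 1 q.1 - A.indicator 1 q.2) * (B.indicator 1 q.1 - B.indicator 1 q.2)
          ∂(P.prod P)) / (p.1 * p.2) := by
        rw [← integral_div]
        congr 1 with q
        rw [hoeffdingKernel, logKernel_comp_eq_indicator, logKernel_comp_eq_indicator]
        ring
    _ = _ := by
        have hAB (ω : Ω) :
            A.indicator 1 ω * B.indicator 1 ω = (A ∩ B).indicator (1 : Ω → ℝ) ω := by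
          rw [inter_indicator_one, Pi.mul_apply]
        simp_rw [integral_prod_sub_mul_sub h1A h1B, hAB]
        rw [integral_indicator_one (hA.inter hB), integral_indicator_one hA,
          integral_indicator_one hB]
        rfl

end Hoeffding

theorem stmt_4 {Ω : Type*} [MeasurableSpace Ω] (P : Measure Ω) [IsProbabilityMeasure P]
    (Z₁ Z₂ : Ω → ℝ) (hZ₁ : Measurable Z₁) (hZ₂ : Measurable Z₂)
    (hZ₁pos : ∀ ω, 0 < Z₁ ω) (hZ₂pos : ∀ ω, 0 < Z₂ ω)
    (hint₁ : Integrable (fun ω => (Real.log (Z₁ ω))^2) P)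
    (hint₂ : Integrable (fun ω => (Real.log (Z₂ ω))^2) P) :
    (∫ ω, Real.log (Z₁ ω) * Real.log (Z₂ ω) ∂P)
        - (∫ ω, Real.log (Z₁ ω) ∂P) * (∫ ω, Real.log (Z₂ ω) ∂P)
      = ∫ r in Set.Ioi (0:ℝ), (∫ s in Set.Ioi (0:ℝ),
          ((P {ω | r < Z₁ ω ∧ s < Z₂ ω}).toReal
            - (P {ω | r < Z₁ ω}).toReal * (P {ω | s < Z₂ ω}).toReal) / s) / r := by
  have hlog₁ : MemLp (fun ω => Real.log (Z₁ ω)) 2 P :=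
    (memLp_two_iff_integrable_sq (Real.measurable_log.comp hZ₁).aestronglyMeasurable).2 hint₁
  have hlog₂ : MemLp (fun ω => Real.log (Z₂ ω)) 2 P :=
    (memLp_two_iff_integrable_sq (Real.measurable_log.comp hZ₂).aestronglyMeasurable).2 hint₂
  have hK := integrable_hoeffdingKernel hZ₁ hZ₂ hZ₁pos hZ₂pos
    (integrable_prod_sub_mul_sub hlog₁ hlog₂)
  have hswap := integral_integral_swap hK
  rw [integral_prod (fun p => ∫ q, hoeffdingKernel Z₁ Z₂ q p ∂(P.prod P))
    hK.integral_prod_right] at hswap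
  simp only [integral_hoeffdingKernel hZ₁ hZ₂] at hswap
  simp_rw [hoeffdingKernel, integral_logKernel_mul_logKernel (hZ₁pos _) (hZ₁pos _) (hZ₂pos _)
    (hZ₂pos _), integral_prod_sub_mul_sub hlog₁ hlog₂] at hswap
  have hrs (r s c : ℝ) : 2 * c / (r * s) = 2 * (c / s / r) := by ring
  simp_rw [hrs, integral_const_mul, integral_div, measureReal_def] at hswap
  linarith
end

section
/- One has 2∫₀^∞ e^{-u}(1 − e^{-u})(1 − u)(du/u) = 2 log 2 − 1. -/
/-!
Since `e^{-u}(1 - e^{-u}) = e^{-u} - e^{-2u}`, the integrand is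
`(e^{-u} - e^{-2u}) / u - (e^{-u} - e^{-2u})`. The first part is a Frullani integral, equal to
`log 2`, and the second integrates to `1 - 1/2`.
-/

open MeasureTheory Real Set Filter Topology

lemma integrableOn_exp_neg_mul_Ioi {a : ℝ} (ha : 0 < a) (c : ℝ) :
    IntegrableOn (fun x : ℝ => exp (-(a * x))) (Ioi c) := by
  simpa only [neg_mul] using exp_neg_integrableOn_Ioi c ha

lemma integral_exp_neg_mul_Ioi_zero {a : ℝ} (ha : 0 < a) :
    ∫ x in Ioi (0 : ℝ), exp (-(a * x)) = a⁻¹ := by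
  simp_rw [← neg_mul]
  rw [integral_exp_mul_Ioi (neg_neg_of_pos ha), mul_zero, exp_zero, div_neg, neg_div, neg_neg,
    one_div]

lemma abs_inv_mul_exp_neg_sub_exp_neg_le {a b x : ℝ} (hab : a ≤ b) (hx : 0 < x) :
    |x⁻¹ * (exp (-(a * x)) - exp (-(b * x)))| ≤ (b - a) * exp (-(a * x)) := by
  have hfactor :
      exp (-(a * x)) - exp (-(b * x)) = exp (-(a * x)) * (1 - exp (-((b - a) * x))) := by
    rw [mul_sub, mul_one, ← exp_add]; ring_nf
  have h0 : 0 ≤ 1 - exp (-((b - a) * x)) := by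
    rw [sub_nonneg, exp_le_one_iff, neg_nonpos]; exact mul_nonneg (sub_nonneg.2 hab) hx.le
  have h1 : 1 - exp (-((b - a) * x)) ≤ (b - a) * x := by
    linarith [add_one_le_exp (-((b - a) * x))]
  rw [hfactor, abs_mul, abs_of_pos (inv_pos.2 hx), abs_of_nonneg (mul_nonneg (exp_pos _).le h0),
    inv_mul_le_iff₀ hx]
  calc exp (-(a * x)) * (1 - exp (-((b - a) * x))) ≤ exp (-(a * x)) * ((b - a) * x) :=
        mul_le_mul_of_nonneg_left h1 (exp_pos _).le
    _ = x * ((b - a) * exp (-(a * x))) := by ring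

lemma integrableOn_inv_mul_exp_neg_sub_exp_neg_of_le {a b : ℝ} (ha : 0 < a) (hab : a ≤ b) :
    IntegrableOn (fun x => x⁻¹ * (exp (-(a * x)) - exp (-(b * x)))) (Ioi 0) := by
  refine ((integrableOn_exp_neg_mul_Ioi ha 0).const_mul (b - a)).mono' ?_ ?_
  · exact (ContinuousOn.mul (continuousOn_inv₀.mono fun x hx => ne_of_gt hx)
      (by fun_prop)).aestronglyMeasurable measurableSet_Ioi
  · filter_upwards [self_mem_ae_restrict measurableSet_Ioi] with x hx
    exact abs_inv_mul_exp_neg_sub_exp_neg_le hab hx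

lemma integrableOn_inv_mul_exp_neg_sub_exp_neg {a b : ℝ} (ha : 0 < a) (hb : 0 < b) :
    IntegrableOn (fun x => x⁻¹ * (exp (-(a * x)) - exp (-(b * x)))) (Ioi 0) := by
  rcases le_total a b with hab | hba
  · exact integrableOn_inv_mul_exp_neg_sub_exp_neg_of_le ha hab
  · refine (integrableOn_inv_mul_exp_neg_sub_exp_neg_of_le hb hba).neg.congr_fun
      (fun x _ => ?_) measurableSet_Ioi
    simp only [Pi.neg_apply]
    ring

theorem integral_Ioi_inv_mul_exp_neg_sub_exp_neg {a b : ℝ} (ha : 0 < a) (hb : 0 < b) :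
    ∫ x in Ioi 0, x⁻¹ * (exp (-(a * x)) - exp (-(b * x))) = log (b / a) := by
  have hcont : Continuous fun x : ℝ => exp (-x) := by fun_prop
  have hL : Tendsto (fun x : ℝ => exp (-x)) (𝓝[>] 0) (𝓝 1) := by
    simpa using (hcont.tendsto 0).mono_left nhdsWithin_le_nhds
  simpa using Frullani.integral_Ioi_eq (hcont.continuousOn.locallyIntegrableOn measurableSet_Ioi)
    ha hb hL tendsto_exp_neg_atTop_nhds_zero (integrableOn_inv_mul_exp_neg_sub_exp_neg ha hb)

theorem stmt_6 :
    2 * (∫ u in Set.Ioi (0:ℝ),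
          Real.exp (-u) * (1 - Real.exp (-u)) * (1 - u) / u)
      = 2 * Real.log 2 - 1 := by
  have hint₁ := integrableOn_exp_neg_mul_Ioi one_pos 0
  have hint₂ := integrableOn_exp_neg_mul_Ioi two_pos 0
  have hint₁₂ : IntegrableOn (fun u : ℝ => exp (-(1 * u)) - exp (-(2 * u))) (Ioi 0) :=
    hint₁.sub hint₂
  have hsplit : ∀ u : ℝ, exp (-u) * (1 - exp (-u)) * (1 - u) / u =
      u⁻¹ * (exp (-(1 * u)) - exp (-(2 * u))) - (exp (-(1 * u)) - exp (-(2 * u))) := by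
    intro u
    rcases eq_or_ne u 0 with rfl | hu
    · simp
    · have hexp_two : exp (-(2 * u)) = exp (-u) * exp (-u) := by rw [← exp_add]; ring_nf
      rw [hexp_two, one_mul]; field_simp
  simp_rw [hsplit]
  rw [integral_sub (integrableOn_inv_mul_exp_neg_sub_exp_neg one_pos two_pos) hint₁₂,
    integral_sub hint₁ hint₂, integral_Ioi_inv_mul_exp_neg_sub_exp_neg one_pos two_pos,
    integral_exp_neg_mul_Ioi_zero one_pos, integral_exp_neg_mul_Ioi_zero two_pos, div_one]
  ring
end

section
/- For a fixed norm |·| on ℝ^d with unit-ball volume v_d, for all r₁ ≥ r₂ > 0, the quantity T(v_d r₁^d, v_d r₂^d) := ∫_{B(0,r₁+r₂) \ B(0,r₁)} ( exp(Leb(B(0,r₁) ∩ B(y,r₂))) − 1 ) dy satisfies T(v_d r₁^d, v_d r₂^d) ≤ d 2^{d-1} v_d r₁^{d-1} r₂ e^{v_d r₂^d}. -/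
/-!
Bound the integrand uniformly: `B(0,r₁) ∩ B(y,r₂) ⊆ B(y,r₂)`, which by translation and
scaling has volume `v r₂^d`, so the integrand is at most `exp (v r₂^d) - 1 ≤ exp (v r₂^d)`.
The annulus `B(0,r₁+r₂) \ B(0,r₁)` has volume `v ((r₁+r₂)^d - r₁^d) ≤ v d (r₁+r₂)^(d-1) r₂`,
and `r₁ + r₂ ≤ 2 r₁`. All balls have finite volume because, by compactness of the unit sphere
of a reference norm, a continuous norm dominates a positive multiple of it.
-/

open MeasureTheory Set Pointwise Module

theorem pow_add_sub_pow_le {r s : ℝ} (hs : 0 ≤ s) (hsr : s ≤ r) (n : ℕ) :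
    (r + s) ^ n - r ^ n ≤ n * 2 ^ (n - 1) * r ^ (n - 1) * s := by
  have hr : 0 ≤ r := hs.trans hsr
  calc (r + s) ^ n - r ^ n ≤ |(r + s) ^ n - r ^ n| := le_abs_self _
    _ ≤ |r + s - r| * n * max |r + s| |r| ^ (n - 1) := abs_pow_sub_pow_le ..
    _ = s * n * (r + s) ^ (n - 1) := by
      rw [add_sub_cancel_left, abs_of_nonneg hs, abs_of_nonneg (by positivity), abs_of_nonneg hr,
        max_eq_left (by linarith)]
    _ ≤ s * n * (2 * r) ^ (n - 1) := by gcongr; linarith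
    _ = n * 2 ^ (n - 1) * r ^ (n - 1) * s := by ring

namespace Seminorm

section Proper

variable {E : Type*} [NormedAddCommGroup E] [NormedSpace ℝ E] [ProperSpace E]
  {p : Seminorm ℝ E}

theorem exists_pos_mul_norm_le (hp : Continuous p) (hker : ∀ x, p x = 0 → x = 0) :
    ∃ c > 0, ∀ x, c * ‖x‖ ≤ p x := by
  rcases subsingleton_or_nontrivial E with hE | hE
  · exact ⟨1, one_pos, fun x => by simp [Subsingleton.elim x 0]⟩
  obtain ⟨x₀, hx₀, hmin⟩ := (isCompact_sphere (0 : E) 1).exists_isMinOn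
    (NormedSpace.sphere_nonempty.mpr zero_le_one) hp.continuousOn
  have hx₀ne : x₀ ≠ 0 := ne_zero_of_mem_unit_sphere ⟨x₀, hx₀⟩
  refine ⟨p x₀, (apply_nonneg p x₀).lt_of_ne fun h => hx₀ne (hker x₀ h.symm), fun x => ?_⟩
  rcases eq_or_ne x 0 with rfl | hx
  · simp
  have hunit : ‖x‖⁻¹ • x ∈ Metric.sphere (0 : E) 1 := by
    simp [norm_smul, inv_mul_cancel₀ (norm_ne_zero_iff.mpr hx)]
  calc p x₀ * ‖x‖ ≤ p (‖x‖⁻¹ • x) * ‖x‖ := by gcongr; exact hmin hunit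
    _ = p x := by
      rw [map_smul_eq_mul, norm_inv, norm_norm]
      field_simp

theorem isBounded_closedBall_of_continuous (hp : Continuous p) (hker : ∀ x, p x = 0 → x = 0)
    (x : E) (r : ℝ) : Bornology.IsBounded (p.closedBall x r) := by
  obtain ⟨c, hc, hle⟩ := exists_pos_mul_norm_le hp hker
  refine Metric.isBounded_closedBall (x := x) (r := r / c) |>.subset fun y hy => ?_
  rw [Metric.mem_closedBall, dist_eq_norm, le_div_iff₀ hc, mul_comm]
  exact (hle _).trans ((mem_closedBall p).mp hy)

theorem measure_closedBall_ne_top_of_continuous [MeasurableSpace E] (μ : Measure E)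
    [IsFiniteMeasureOnCompacts μ] (hp : Continuous p) (hker : ∀ x, p x = 0 → x = 0)
    (x : E) (r : ℝ) : μ (p.closedBall x r) ≠ ⊤ :=
  (isBounded_closedBall_of_continuous hp hker x r).measure_lt_top.ne

end Proper

section AddHaar

variable {E : Type*} [NormedAddCommGroup E] [NormedSpace ℝ E] [FiniteDimensional ℝ E]
  [MeasurableSpace E] [BorelSpace E] (μ : Measure E) [μ.IsAddHaarMeasure] {p : Seminorm ℝ E}

theorem addHaar_real_closedBall (x : E) {r : ℝ} (hr : 0 < r) :
    μ.real (p.closedBall x r) = r ^ finrank ℝ E * μ.real (p.closedBall 0 1) := by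
  have hball : p.closedBall x r = x +ᵥ r • p.closedBall 0 1 := by
    rw [smul_closedBall_zero (by simpa using hr.ne'), vadd_closedBall, Real.norm_of_nonneg hr.le,
      mul_one, vadd_eq_add, add_zero]
  rw [hball, measureReal_def, measure_vadd, Measure.addHaar_smul_of_nonneg μ hr.le,
    ENNReal.toReal_mul, ENNReal.toReal_ofReal (by positivity), measureReal_def]

theorem addHaar_real_closedBall_sdiff_closedBall_le (hp : Continuous p)
    (hker : ∀ x, p x = 0 → x = 0) {r s : ℝ} (hs : 0 < s) (hsr : s ≤ r) :
    μ.real (p.closedBall 0 (r + s) \ p.closedBall 0 r)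
      ≤ finrank ℝ E * 2 ^ (finrank ℝ E - 1) * r ^ (finrank ℝ E - 1) * s
          * μ.real (p.closedBall 0 1) := by
  have hclosed : IsClosed (p.closedBall 0 r) :=
    isClosed_le (hp.comp (continuous_id.sub continuous_const)) continuous_const
  rw [measureReal_sdiff (closedBall_mono (by linarith)) hclosed.measurableSet
      (measure_closedBall_ne_top_of_continuous μ hp hker _ _),
    addHaar_real_closedBall μ 0 (by linarith), addHaar_real_closedBall μ 0 (hs.trans_le hsr),
    ← sub_mul]
  exact mul_le_mul_of_nonneg_right (pow_add_sub_pow_le hs.le hsr _) measureReal_nonneg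

theorem setIntegral_exp_addHaar_real_inter_closedBall_sub_one_le (hp : Continuous p)
    (hker : ∀ x, p x = 0 → x = 0) {r₁ r₂ : ℝ} (hr₂ : 0 < r₂) (hr : r₂ ≤ r₁) :
    ∫ y in p.closedBall 0 (r₁ + r₂) \ p.closedBall 0 r₁,
        (Real.exp (μ.real (p.closedBall 0 r₁ ∩ p.closedBall y r₂)) - 1) ∂μ
      ≤ finrank ℝ E * 2 ^ (finrank ℝ E - 1) * μ.real (p.closedBall 0 1)
          * r₁ ^ (finrank ℝ E - 1) * r₂
          * Real.exp (μ.real (p.closedBall 0 1) * r₂ ^ finrank ℝ E) := by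
  set n := finrank ℝ E
  set V := μ.real (p.closedBall 0 1)
  set X := V * r₂ ^ n
  set A := p.closedBall 0 (r₁ + r₂) \ p.closedBall 0 r₁
  have hinter (y : E) : μ.real (p.closedBall 0 r₁ ∩ p.closedBall y r₂) ≤ X := calc
    _ ≤ μ.real (p.closedBall y r₂) := measureReal_mono inter_subset_right
      (measure_closedBall_ne_top_of_continuous μ hp hker _ _)
    _ = X := by rw [addHaar_real_closedBall μ y hr₂, mul_comm]
  have hintegrand : ∀ y ∈ A,
      ‖Real.exp (μ.real (p.closedBall 0 r₁ ∩ p.closedBall y r₂)) - 1‖ ≤ Real.exp X - 1 := by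
    intro y _
    rw [Real.norm_of_nonneg (sub_nonneg.2 (Real.one_le_exp measureReal_nonneg))]
    gcongr
    exact hinter y
  have hA : μ A < ⊤ := (measure_mono sdiff_subset).trans_lt
    (measure_closedBall_ne_top_of_continuous μ hp hker _ _).lt_top
  calc _ ≤ ‖∫ y in A, (Real.exp (μ.real (p.closedBall 0 r₁ ∩ p.closedBall y r₂)) - 1) ∂μ‖ :=
        le_abs_self _
    _ ≤ (Real.exp X - 1) * μ.real A := norm_setIntegral_le_of_norm_le_const hA hintegrand
    _ ≤ Real.exp X * (n * 2 ^ (n - 1) * r₁ ^ (n - 1) * r₂ * V) :=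
      mul_le_mul (by linarith) (addHaar_real_closedBall_sdiff_closedBall_le μ hp hker hr₂ hr)
        measureReal_nonneg (Real.exp_pos X).le
    _ = n * 2 ^ (n - 1) * V * r₁ ^ (n - 1) * r₂ * Real.exp X := by ring

end AddHaar

end Seminorm

theorem stmt_8_general (d : ℕ)
    (nrm : (Fin d → ℝ) → ℝ)
    (h0 : ∀ x, nrm x = 0 ↔ x = 0)
    (hsmul : ∀ (a : ℝ) x, nrm (a • x) = |a| * nrm x)
    (htri : ∀ x y, nrm (x + y) ≤ nrm x + nrm y)
    (hcont : Continuous nrm)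
    (r₁ r₂ : ℝ) (hr₂ : 0 < r₂) (hr : r₂ ≤ r₁) :
    (∫ y in {y : Fin d → ℝ | nrm y ≤ r₁ + r₂} \ {y : Fin d → ℝ | nrm y ≤ r₁},
        (Real.exp ((volume {z : Fin d → ℝ | nrm z ≤ r₁ ∧ nrm (z - y) ≤ r₂}).toReal) - 1))
      ≤ (d:ℝ) * 2^(d-1) * (volume {y : Fin d → ℝ | nrm y ≤ 1}).toReal
          * r₁^(d-1) * r₂
          * Real.exp ((volume {y : Fin d → ℝ | nrm y ≤ 1}).toReal * r₂^d) := by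
  let p : Seminorm ℝ (Fin d → ℝ) :=
    Seminorm.of nrm htri fun a x => by rw [hsmul, Real.norm_eq_abs]
  have key := Seminorm.setIntegral_exp_addHaar_real_inter_closedBall_sub_one_le volume
    (p := p) hcont (fun x => (h0 x).mp) hr₂ hr
  simp only [Seminorm.closedBall, sub_zero, Set.inter_def, Set.mem_ofPred_eq,
    measureReal_def, Module.finrank_fin_fun] at key
  exact key

theorem stmt_8 (d : ℕ) (hd : 0 < d)
    (nrm : (Fin d → ℝ) → ℝ)
    (h0 : ∀ x, nrm x = 0 ↔ x = 0)
    (hsmul : ∀ (a : ℝ) x, nrm (a • x) = |a| * nrm x)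
    (htri : ∀ x y, nrm (x + y) ≤ nrm x + nrm y)
    (hcont : Continuous nrm)
    (r₁ r₂ : ℝ) (hr₂ : 0 < r₂) (hr : r₂ ≤ r₁) :
    (∫ y in {y : Fin d → ℝ | nrm y ≤ r₁ + r₂} \ {y : Fin d → ℝ | nrm y ≤ r₁},
        (Real.exp ((volume {z : Fin d → ℝ | nrm z ≤ r₁ ∧ nrm (z - y) ≤ r₂}).toReal) - 1))
      ≤ (d:ℝ) * 2^(d-1) * (volume {y : Fin d → ℝ | nrm y ≤ 1}).toReal
          * r₁^(d-1) * r₂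
          * Real.exp ((volume {y : Fin d → ℝ | nrm y ≤ 1}).toReal * r₂^d) :=
  stmt_8_general d nrm h0 hsmul htri hcont r₁ r₂ hr₂ hr
end
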